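/- Let k, ℓ ≥ 0, let π1 ∈ T_k and π2 ∈ T_ℓ (with the convention T_0 = {ε}). Then slmax(C1(π1, π2)) = slmax(π1) + slmax(π2) + 1. -/

import Mathlib

namespace TSP

theorem foldr_max_mem {α : Type} [LinearOrder α] (x : α) (l : List α) :
    l.foldr max x ∈ x :: l := by
  induction l with
  | nil => simp
  | cons a t ih =>
    simp only [List.foldr_cons]
    rcases max_choice a (t.foldr max x) with h | h <;> rw [h]
    · simp
    · rcases List.mem_cons.mp ih with h' | h'
      · rw [h']; simp
      · exact List.mem_cons.mpr (Or.inr (List.mem_cons.mpr (Or.inr h')))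

theorem length_takeWhile_lt {α : Type} [DecidableEq α] {m : α} {l : List α}
    (h : m ∈ l) : (l.takeWhile (· ≠ m)).length < l.length := by
  have hd : l.dropWhile (· ≠ m) ≠ [] := by
    intro hnil
    have := List.dropWhile_eq_nil_iff.mp hnil m h
    simp at this
  have hsum : (l.takeWhile (· ≠ m)).length + (l.dropWhile (· ≠ m)).length = l.length := by
    rw [← List.length_append, List.takeWhile_append_dropWhile]
  have : 0 < (l.dropWhile (· ≠ m)).length := List.length_pos_iff.mpr hd
  omega

theorem length_tail_dropWhile_lt {α : Type} [DecidableEq α] {m : α} {l : List α}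
    (h : l ≠ []) : ((l.dropWhile (· ≠ m)).tail).length < l.length := by
  have hsum : (l.takeWhile (· ≠ m)).length + (l.dropWhile (· ≠ m)).length = l.length := by
    rw [← List.length_append, List.takeWhile_append_dropWhile]
  have h2 : ((l.dropWhile (· ≠ m)).tail).length = (l.dropWhile (· ≠ m)).length - 1 :=
    List.length_tail
  have : 0 < l.length := List.length_pos_iff.mpr h
  omega

/-- The stack-sorting operator `S`: `S(ε) = ε`, and if `A` is nonempty with
largest element `m` and `A = A_L · (m) · A_R`, then `S(A) = S(A_L) · S(A_R) · (m)`. -/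
def S {α : Type} [LinearOrder α] : List α → List α
  | [] => []
  | x :: l =>
    let m := l.foldr max x
    S ((x :: l).takeWhile (· ≠ m)) ++ S (((x :: l).dropWhile (· ≠ m)).tail) ++ [m]
termination_by l => l.length
decreasing_by
  · first
    | exact length_takeWhile_lt (foldr_max_mem x l)
    | (rw [List.foldr_attach]; exact length_takeWhile_lt (foldr_max_mem x l))
    | (simp only [List.foldr_attach]; exact length_takeWhile_lt (foldr_max_mem x l))
  · exact length_tail_dropWhile_lt (by simp)

/-- The identity permutation `id_n = (1, 2, …, n)` as a list. -/
def idPerm (n : ℕ) : List ℕ := List.range' 1 n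

/-- `l` is a permutation of `{1, …, n}` (viewed as a sequence). -/
def IsPermOf (n : ℕ) (l : List ℕ) : Prop := l.Perm (idPerm n)

/-- `l` is a two-stack sortable permutation (of `{1, …, len l}`). -/
def Is2SS (l : List ℕ) : Prop := IsPermOf l.length l ∧ S (S l) = idPerm l.length

/-- `σ^{+k}`: add `k` to every entry. -/
def shift (k : ℕ) (l : List ℕ) : List ℕ := l.map (· + k)

/-- `σ^{+(k1,m,k2)}`: add `k1` to every entry strictly smaller than `m`, `k2` to the others. -/
def shift3 (k1 m k2 : ℕ) (l : List ℕ) : List ℕ :=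
  l.map (fun a => if a < m then a + k1 else a + k2)

/-- Standardization `P(A)`: the permutation of `{1,…,len A}` in the same relative order. -/
def stand (l : List ℕ) : List ℕ := l.map (fun a => (l.filter (fun b => b ≤ a)).length)

/-- Avoidance of the pattern 231: no positions `i < j < k` with `l(k) < l(i) < l(j)`. -/
def Avoids231 (l : List ℕ) : Prop :=
  ¬ ∃ i j k, i < j ∧ j < k ∧ k < l.length ∧
      l.getD k 0 < l.getD i 0 ∧ l.getD i 0 < l.getD j 0

/-- The list of values of the left-to-right maxima of `l`, in order. -/
def lrMaxima (l : List ℕ) : List ℕ :=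
  ((List.range l.length).filter
    (fun i => (l.take i).all (fun b => b < l.getD i 0))).map (fun i => l.getD i 0)

/-- `lmax`: the number of left-to-right maxima. -/
def lmax (l : List ℕ) : ℕ :=
  (List.range l.length).countP (fun i => (l.take i).all (fun b => b < l.getD i 0))

/-- `rmax`: the number of right-to-left maxima. -/
def rmax (l : List ℕ) : ℕ :=
  (List.range l.length).countP (fun i => (l.drop (i+1)).all (fun b => b < l.getD i 0))

/-- `asc`: the number of ascents. -/
def asc (l : List ℕ) : ℕ :=
  (List.range (l.length - 1)).countP (fun i => l.getD i 0 < l.getD (i+1) 0)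

/-- `des`: the number of descents. -/
def des (l : List ℕ) : ℕ :=
  (List.range (l.length - 1)).countP (fun i => l.getD (i+1) 0 < l.getD i 0)

/-- `slmax(π)`: the number of left-to-right maxima of `S(π)`. -/
def slmax (l : List ℕ) : ℕ := lmax (S l)

/-- `sldes(π)`: the number of entries `a` that precede `a - 1` in `S(π)`. -/
def sldes (l : List ℕ) : ℕ :=
  (List.range (S l).length).countP
    (fun i => ((S l).drop (i+1)).any (fun b => b + 1 = (S l).getD i 0))

/-- The construction `C1(π1, π2) = π1 · (k+ℓ+1) · π2^{+k}`. -/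
def C1 (p1 p2 : List ℕ) : List ℕ :=
  p1 ++ (p1.length + p2.length + 1) :: shift p1.length p2

/-- The `i`-th left-to-right maximum `a_i` of `S(π2)` (1-indexed). -/
def lrm (p2 : List ℕ) (i : ℕ) : ℕ := (lrMaxima (S p2)).getD (i - 1) 0

/-- The construction `C2(π1, π2, i) = π1^{+(0,k,a_i)} · (k+ℓ+1) · π2^{+(k-1,a_i+1,k)}`. -/
def C2 (p1 p2 : List ℕ) (i : ℕ) : List ℕ :=
  shift3 0 p1.length (lrm p2 i) p1 ++
    (p1.length + p2.length + 1) :: shift3 (p1.length - 1) (lrm p2 i + 1) p1.length p2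

/-- The decomposition `D(π) = (P(π_ℓ), P(π_r))`, where `π = π_ℓ · (n) · π_r`
with `n` the largest entry of `π`. -/
def D (l : List ℕ) : List ℕ × List ℕ :=
  match l with
  | [] => ([], [])
  | x :: t =>
    let m := t.foldr max x
    (stand ((x :: t).takeWhile (· ≠ m)), stand (((x :: t).dropWhile (· ≠ m)).tail))

/-! The maximum `k + ℓ + 1` of `C1(π1, π2)` sits between `π1` and `π2^{+k}`, all of whose entries
are smaller, so `S(C1(π1, π2)) = S(π1) · S(π2)^{+k} · (k + ℓ + 1)` (stack sorting commutes with the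
order-preserving shift). Every entry of `S(π1)` is below every entry of `S(π2)^{+k}`, so the
left-to-right maxima of the concatenation are those of the three blocks, and the shift does not
change which entries of `S(π2)` are left-to-right maxima. -/

section StackSort

variable {α β : Type} [LinearOrder α] [LinearOrder β]

theorem le_foldr_max {x y : α} {l : List α} (hy : y ∈ x :: l) : y ≤ l.foldr max x := by
  induction l generalizing y with
  | nil => simp_all
  | cons a t ih =>
    simp only [List.mem_cons, List.foldr_cons, le_max_iff] at hy ⊢
    rcases hy with rfl | rfl | hy
    · exact .inr (ih (by simp))
    · exact .inl le_rfl
    · exact .inr (ih (by simp [hy]))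

theorem foldr_max_eq_of_mem {x m : α} {l : List α} (hm : m ∈ x :: l)
    (hle : ∀ y ∈ x :: l, y ≤ m) : l.foldr max x = m :=
  le_antisymm (hle _ (foldr_max_mem x l)) (le_foldr_max hm)

theorem _root_.Monotone.foldr_max_map {f : α → β} (hf : Monotone f) (x : α) (l : List α) :
    (l.map f).foldr max (f x) = f (l.foldr max x) := by
  induction l with
  | nil => rfl
  | cons a t ih => simp only [List.map_cons, List.foldr_cons, ih, hf.map_max]

theorem takeWhile_ne_append_cons_tail_dropWhile {m : α} {l : List α} (hm : m ∈ l) :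
    l.takeWhile (· ≠ m) ++ m :: (l.dropWhile (· ≠ m)).tail = l := by
  induction l with
  | nil => simp at hm
  | cons a t ih =>
    by_cases ha : a = m
    · subst ha; simp
    · have ht : m ∈ t := (List.mem_cons.mp hm).resolve_left (Ne.symm ha)
      rw [List.takeWhile_cons_of_pos (by simpa using ha),
        List.dropWhile_cons_of_pos (by simpa using ha), List.cons_append, ih ht]

theorem S_nil : S ([] : List α) = [] := by
  rw [S]

theorem S_cons (x : α) (l : List α) :
    S (x :: l) = S ((x :: l).takeWhile (· ≠ l.foldr max x)) ++
      S (((x :: l).dropWhile (· ≠ l.foldr max x)).tail) ++ [l.foldr max x] := by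
  rw [S]

theorem S_induction {motive : List α → Prop} (nil : motive [])
    (cons : ∀ x l, motive ((x :: l).takeWhile (· ≠ l.foldr max x)) →
      motive (((x :: l).dropWhile (· ≠ l.foldr max x)).tail) → motive (x :: l))
    (l : List α) : motive l := by
  induction l using S.induct with
  | case1 => exact nil
  | case2 x l m ihA ihB =>
    have hm : m = l.foldr max x := List.foldr_attach
    exact cons x l (hm ▸ ihA) (hm ▸ ihB)

theorem S_append_cons {A B : List α} {m : α} (hA : ∀ a ∈ A, a < m) (hB : ∀ b ∈ B, b < m) :
    S (A ++ m :: B) = S A ++ S B ++ [m] := by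
  have hAm : ∀ a ∈ A, decide (a ≠ m) = true := fun a ha => by simpa using (hA a ha).ne
  obtain ⟨x, l, hxl⟩ := List.exists_cons_of_ne_nil (List.append_ne_nil_of_right_ne_nil A
    (List.cons_ne_nil m B))
  have hmax : l.foldr max x = m := by
    refine foldr_max_eq_of_mem (hxl ▸ by simp) fun y hy => ?_
    rw [← hxl] at hy
    rcases List.mem_append.mp hy with hy | hy | ⟨_, hy⟩
    exacts [(hA y hy).le, le_rfl, (hB y hy).le]
  rw [hxl, S_cons, hmax, ← hxl, List.takeWhile_append_of_pos hAm,
    List.dropWhile_append_of_pos hAm, List.takeWhile_cons_of_neg (by simp),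
    List.dropWhile_cons_of_neg (by simp), List.append_nil, List.tail_cons]

theorem _root_.StrictMono.S_map {f : α → β} (hf : StrictMono f) (l : List α) :
    S (l.map f) = (S l).map f := by
  induction l using S_induction with
  | nil => simp [S_nil]
  | cons x l ihA ihB =>
    have hne : (fun b => decide (b ≠ f (l.foldr max x))) ∘ f =
        fun a => decide (a ≠ l.foldr max x) := by
      funext a; simp [hf.injective.eq_iff]
    rw [List.map_cons, S_cons (f x), hf.monotone.foldr_max_map, ← List.map_cons,
      List.takeWhile_map, List.dropWhile_map, hne, ← List.map_tail, ihA, ihB, S_cons x]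
    simp

theorem S_perm (l : List α) : (S l).Perm l := by
  induction l using S_induction with
  | nil => simp [S_nil]
  | cons x l ihA ihB =>
    rw [S_cons]
    conv_rhs => rw [← takeWhile_ne_append_cons_tail_dropWhile (foldr_max_mem x l)]
    rw [List.append_assoc]
    exact ihA.append (ihB.append_right _ |>.trans (List.perm_append_singleton _ _))

theorem mem_S {a : α} {l : List α} : a ∈ S l ↔ a ∈ l :=
  (S_perm l).mem_iff

end StackSort

theorem lmax_append {A B : List ℕ} (h : ∀ a ∈ A, ∀ b ∈ B, a < b) :
    lmax (A ++ B) = lmax A + lmax B := by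
  unfold lmax
  rw [List.length_append, List.range_add, List.countP_append, List.countP_map]
  congr 1
  · refine List.countP_congr fun i hi => ?_
    have hi : i < A.length := List.mem_range.mp hi
    rw [List.take_append_of_le_length hi.le, List.getD_append _ _ _ _ hi]
  · refine List.countP_congr fun j hj => ?_
    have hj : j < B.length := List.mem_range.mp hj
    have hBj : B.getD j 0 ∈ B := by
      rw [List.getD_eq_getElem _ _ hj]; exact List.getElem_mem _
    have hA : A.all (· < B.getD j 0) = true := by
      simpa using fun a ha => h a ha _ hBj
    simp only [Function.comp_apply]
    rw [List.take_append, List.take_of_length_le (by omega), Nat.add_sub_cancel_left,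
      List.getD_append_right _ _ _ _ (by omega), Nat.add_sub_cancel_left, List.all_append, hA,
      Bool.true_and]

theorem _root_.StrictMono.lmax_map {f : ℕ → ℕ} (hf : StrictMono f) (l : List ℕ) :
    lmax (l.map f) = lmax l := by
  unfold lmax
  rw [List.length_map]
  refine List.countP_congr fun i hi => ?_
  have hi : i < l.length := List.mem_range.mp hi
  have hfi : (l.map f).getD i 0 = f (l.getD i 0) := by
    rw [List.getD_eq_getElem _ _ (by simpa using hi), List.getD_eq_getElem _ _ hi,
      List.getElem_map]
  rw [hfi, ← List.map_take, List.all_map]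
  simp only [Function.comp_def, hf.lt_iff_lt]

theorem lmax_singleton (m : ℕ) : lmax [m] = 1 := rfl

theorem IsPermOf.mem_iff {n a : ℕ} {l : List ℕ} (h : IsPermOf n l) :
    a ∈ l ↔ 1 ≤ a ∧ a ≤ n := by
  rw [List.Perm.mem_iff h, idPerm, List.mem_range'_1]
  omega

theorem S_C1 {π1 π2 : List ℕ} (h1 : IsPermOf π1.length π1) (h2 : IsPermOf π2.length π2) :
    S (C1 π1 π2) =
      S π1 ++ (S π2).map (· + π1.length) ++ [π1.length + π2.length + 1] := by
  rw [C1, shift, S_append_cons, (add_left_strictMono (a := π1.length)).S_map]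
  · intro a ha; have := h1.mem_iff.mp ha; omega
  · simp only [List.mem_map]
    rintro _ ⟨b, hb, rfl⟩; have := h2.mem_iff.mp hb; omega

theorem slmax_C1_general (π1 π2 : List ℕ) (h1' : Is2SS π1) (h2' : Is2SS π2) :
    slmax (C1 π1 π2) = slmax π1 + slmax π2 + 1 := by
  have hb1 : ∀ a ∈ S π1, 1 ≤ a ∧ a ≤ π1.length := fun a ha => h1'.1.mem_iff.mp (mem_S.mp ha)
  have hb2 : ∀ a ∈ S π2, 1 ≤ a ∧ a ≤ π2.length := fun a ha => h2'.1.mem_iff.mp (mem_S.mp ha)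
  rw [slmax, S_C1 h1'.1 h2'.1, lmax_append, lmax_append,
    (add_left_strictMono (a := π1.length)).lmax_map, lmax_singleton, slmax, slmax]
  · simp only [List.mem_map]
    rintro a ha _ ⟨b, hb, rfl⟩
    have := hb1 a ha; have := hb2 b hb; omega
  · simp only [List.mem_append, List.mem_map, List.mem_singleton]
    rintro a (ha | ⟨b, hb, rfl⟩) _ rfl
    · have := hb1 a ha; omega
    · have := hb2 b hb; omega

/-- For `k, ℓ ≥ 0`, `π1 ∈ T_k` and `π2 ∈ T_ℓ` (with `T_0 = {ε}`),
`slmax(C1(π1, π2)) = slmax(π1) + slmax(π2) + 1`. -/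
theorem slmax_C1 (k ℓ : ℕ) (π1 π2 : List ℕ)
    (h1 : π1.length = k) (h1' : Is2SS π1) (h2 : π2.length = ℓ) (h2' : Is2SS π2) :
    slmax (C1 π1 π2) = slmax π1 + slmax π2 + 1 :=
  slmax_C1_general π1 π2 h1' h2'

end TSP
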